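/- arXiv:0901.2951 — 4 statements merged into one kernel-verified Lean document; each statement's English description precedes it below -/
import Mathlib

section
/- Suppose X_N is an exchangeable ensemble of size N with values in ℝ^m, D_N is an exchangeable ensemble of size N with values in ℝ^d, and the random matrices X_N and D_N are independent. Let F : ℝ^{m×N} × ℝ^m × ℝ^d → ℝ^n be measurable and permutation invariant in its first argument, i.e., F(X_N Π, x, d) = F(X_N, x, d) for every N×N permutation matrix Π. Then the ensemble Y_N with members Y_{Ni} = F(X_N, X_{Ni}, D_{Ni}), i = 1,…,N, is exchangeable. -/
open MeasureTheory ProbabilityTheory Matrix Filter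
open scoped ENNReal NNReal

noncomputable section

variable {Ω : Type*} [MeasureSpace Ω] [IsProbabilityMeasure (ℙ : Measure Ω)]

/-- A vector in `ℝ^n` viewed as an element of Euclidean space, so that `‖toEuc x‖`
is the Euclidean norm of `x`. -/
def toEuc {n : ℕ} (x : Fin n → ℝ) : EuclideanSpace ℝ (Fin n) :=
  (WithLp.equiv 2 (Fin n → ℝ)).symm x

/-- A matrix viewed as a continuous linear map between Euclidean spaces, so that
`‖opCLM M‖` is the operator (spectral) norm of `M` induced by the Euclidean norm. -/
def opCLM {m n : ℕ} (M : Matrix (Fin m) (Fin n) ℝ) :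
    EuclideanSpace ℝ (Fin n) →L[ℝ] EuclideanSpace ℝ (Fin m) :=
  LinearMap.toContinuousLinearMap (Matrix.toEuclideanLin M)

/-- The stochastic `L^p` norm `(E ‖X‖^p)^(1/p)` (Euclidean norm) of a random vector. -/
def vLp {n : ℕ} (p : ℝ) (X : Ω → Fin n → ℝ) : ℝ≥0∞ :=
  eLpNorm (fun ω => toEuc (X ω)) (ENNReal.ofReal p) ℙ

/-- The stochastic `L^p` norm `(E ‖X‖^p)^(1/p)` (operator norm) of a random matrix. -/
def mLp {m n : ℕ} (p : ℝ) (M : Ω → Matrix (Fin m) (Fin n) ℝ) : ℝ≥0∞ :=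
  eLpNorm (fun ω => opCLM (M ω)) (ENNReal.ofReal p) ℙ

/-- An ensemble (family of random elements indexed by `Fin N`) is exchangeable if its joint
distribution is invariant under every permutation of the members. -/
def Exchangeable {α : Type*} [MeasurableSpace α] {N : ℕ} (X : Fin N → Ω → α) : Prop :=
  ∀ σ : Equiv.Perm (Fin N),
    Measure.map (fun ω i => X (σ i) ω) (ℙ : Measure Ω)
      = Measure.map (fun ω i => X i ω) (ℙ : Measure Ω)

/-- Ensemble sample mean `X̄_N = (1/N) ∑ᵢ X_{Ni}`. -/
def sampleMean {n N : ℕ} (X : Fin N → Ω → Fin n → ℝ) (ω : Ω) : Fin n → ℝ :=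
  (N : ℝ)⁻¹ • ∑ i, X i ω

/-- Ensemble sample covariance `C(X_N) = (1/N) ∑ᵢ X_{Ni} X_{Ni}ᵀ − X̄_N X̄_Nᵀ`. -/
def sampleCov {n N : ℕ} (X : Fin N → Ω → Fin n → ℝ) (ω : Ω) : Matrix (Fin n) (Fin n) ℝ :=
  (N : ℝ)⁻¹ • ∑ i, vecMulVec (X i ω) (X i ω)
    - vecMulVec (sampleMean X ω) (sampleMean X ω)

/-- `μ` is the multivariate Gaussian distribution `N(u, Q)` on `ℝ^n`: every linear functional
`x ↦ ⟨l, x⟩` is a real Gaussian with mean `⟨l, u⟩` and variance `lᵀ Q l`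
(the Cramér–Wold characterization). -/
def IsGaussianVec {n : ℕ} (μ : Measure (Fin n → ℝ)) (u : Fin n → ℝ)
    (Q : Matrix (Fin n) (Fin n) ℝ) : Prop :=
  ∀ l : Fin n → ℝ,
    Measure.map (fun x => ∑ i, l i * x i) μ
      = gaussianReal (∑ i, l i * u i) (Real.toNNReal (l ⬝ᵥ Q.mulVec l))

/-- Covariance of two real random variables, `Cov(X, Y) = E(XY) − E(X)E(Y)`. -/
def cov (X Y : Ω → ℝ) : ℝ :=
  (∫ ω, X ω * Y ω) - (∫ ω, X ω) * (∫ ω, Y ω)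

/-- Covariance matrix `Cov(X, Y) = E(X Yᵀ) − E(X) E(Y)ᵀ` of two random vectors. -/
def covMat {n m : ℕ} (X : Ω → Fin n → ℝ) (Y : Ω → Fin m → ℝ) :
    Matrix (Fin n) (Fin m) ℝ :=
  fun i j => cov (fun ω => X ω i) (fun ω => Y ω j)

/-! Independence makes the joint law of `(X_N, D_N)` the product of the two marginal laws, each
of which is permutation invariant, so the paired ensemble `(X_{Ni}, D_{Ni})` is exchangeable.
`Y_N` is the image of that ensemble under `z ↦ (F(z.1, z_i.1, z_i.2))_i`, which commutes with
permutations of the members because `F` is invariant in its first argument, and pushing a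
permutation-invariant law forward along a permutation-equivariant map keeps it invariant. -/

theorem ProbabilityTheory.IndepFun.map_prodMk_eq_of_map_eq {Ω α β : Type*} [MeasurableSpace Ω]
    [MeasurableSpace α] [MeasurableSpace β] {μ : Measure Ω} [IsFiniteMeasure μ]
    {X X' : Ω → α} {Y Y' : Ω → β} (hX : AEMeasurable X μ) (hY : AEMeasurable Y μ)
    (hX' : AEMeasurable X' μ) (hY' : AEMeasurable Y' μ)
    (hXY : IndepFun X Y μ) (hXY' : IndepFun X' Y' μ)
    (hXX' : μ.map X' = μ.map X) (hYY' : μ.map Y' = μ.map Y) :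
    μ.map (fun ω => (X' ω, Y' ω)) = μ.map (fun ω => (X ω, Y ω)) := by
  rw [hXY'.map_prod_eq_prod_map_map hX' hY', hXY.map_prod_eq_prod_map_map hX hY, hXX', hYY']

theorem Exchangeable.prodMk {Ω α β : Type*} [MeasureSpace Ω] [IsFiniteMeasure (ℙ : Measure Ω)]
    [MeasurableSpace α] [MeasurableSpace β] {N : ℕ} {X : Fin N → Ω → α} {Y : Fin N → Ω → β}
    (hXex : Exchangeable X) (hYex : Exchangeable Y)
    (hX : ∀ i, Measurable (X i)) (hY : ∀ i, Measurable (Y i))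
    (hXY : IndepFun (fun ω i => X i ω) (fun ω i => Y i ω) ℙ) :
    Exchangeable (fun i ω => (X i ω, Y i ω)) := by
  intro σ
  have hXm : Measurable fun ω i => X i ω := measurable_pi_lambda _ hX
  have hYm : Measurable fun ω i => Y i ω := measurable_pi_lambda _ hY
  have hpermX : Measurable fun (f : Fin N → α) i => f (σ i) :=
    measurable_pi_lambda _ fun i => measurable_pi_apply _
  have hpermY : Measurable fun (f : Fin N → β) i => f (σ i) :=
    measurable_pi_lambda _ fun i => measurable_pi_apply _
  have hjoint := hXY.map_prodMk_eq_of_map_eq hXm.aemeasurable hYm.aemeasurable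
    (hpermX.comp hXm).aemeasurable (hpermY.comp hYm).aemeasurable
    (hXY.comp hpermX hpermY) (hXex σ) (hYex σ)
  have hpaired :=
    congrArg (Measure.map (MeasurableEquiv.arrowProdEquivProdArrow α β (Fin N)).symm) hjoint
  rwa [Measure.map_map (MeasurableEquiv.measurable _)
      ((hpermX.comp hXm).prodMk (hpermY.comp hYm)),
    Measure.map_map (MeasurableEquiv.measurable _) (hXm.prodMk hYm)] at hpaired

theorem Exchangeable.comp_equivariant {Ω α β : Type*} [MeasureSpace Ω] [MeasurableSpace α]
    [MeasurableSpace β] {N : ℕ} {X : Fin N → Ω → α} (hXex : Exchangeable X)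
    (hX : ∀ i, Measurable (X i)) {G : (Fin N → α) → Fin N → β} (hG : Measurable G)
    (hGσ : ∀ (σ : Equiv.Perm (Fin N)) f, G (fun i => f (σ i)) = fun i => G f (σ i)) :
    Exchangeable (fun i ω => G (fun j => X j ω) i) := by
  intro σ
  have hXm : Measurable fun ω i => X i ω := measurable_pi_lambda _ hX
  have hXσm : Measurable fun ω i => X (σ i) ω := measurable_pi_lambda _ fun i => hX (σ i)
  calc Measure.map (fun ω i => G (fun j => X j ω) (σ i)) ℙ
      = (Measure.map (fun ω i => X (σ i) ω) ℙ).map G := by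
        rw [Measure.map_map hG hXσm]
        congr 1
        funext ω
        exact (hGσ σ _).symm
    _ = Measure.map (fun ω i => G (fun j => X j ω) i) ℙ := by
        rw [hXex σ, Measure.map_map hG hXm]
        rfl

/-- If `X_N` and `D_N` are exchangeable ensembles, independent of each other,
and `F` is measurable and permutation invariant in its first (whole-ensemble) argument, then
the ensemble with members `Y_{Ni} = F(X_N, X_{Ni}, D_{Ni})` is exchangeable. -/
theorem exchangeable_of_permutation_invariant_map
    {m d n N : ℕ} (X : Fin N → Ω → Fin m → ℝ) (D : Fin N → Ω → Fin d → ℝ)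
    (hXmeas : ∀ i, Measurable (X i)) (hDmeas : ∀ i, Measurable (D i))
    (hXex : Exchangeable X) (hDex : Exchangeable D)
    (hXD : IndepFun (fun ω (i : Fin N) => X i ω) (fun ω (i : Fin N) => D i ω) ℙ)
    (F : (Fin N → Fin m → ℝ) → (Fin m → ℝ) → (Fin d → ℝ) → (Fin n → ℝ))
    (hFmeas : Measurable
      (fun q : (Fin N → Fin m → ℝ) × (Fin m → ℝ) × (Fin d → ℝ) => F q.1 q.2.1 q.2.2))
    (hFinv : ∀ (σ : Equiv.Perm (Fin N)) (E : Fin N → Fin m → ℝ) (x : Fin m → ℝ)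
      (z : Fin d → ℝ), F (fun i => E (σ i)) x z = F E x z) :
    Exchangeable (fun i ω => F (fun j => X j ω) (X i ω) (D i ω)) := by
  let G : (Fin N → (Fin m → ℝ) × (Fin d → ℝ)) → Fin N → Fin n → ℝ :=
    fun z i => F (fun j => (z j).1) (z i).1 (z i).2
  have hG : Measurable G :=
    measurable_pi_lambda _ fun i => hFmeas.comp <|
      (measurable_pi_lambda _ fun j => (measurable_pi_apply j).fst).prodMk
        ((measurable_pi_apply i).fst.prodMk (measurable_pi_apply i).snd)
  have hGσ : ∀ (σ : Equiv.Perm (Fin N)) z, G (fun i => z (σ i)) = fun i => G z (σ i) :=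
    fun σ z => funext fun i => hFinv σ (fun j => (z j).1) _ _
  exact (hXex.prodMk hDex hXmeas hDmeas hXD).comp_equivariant
    (fun i => (hXmeas i).prodMk (hDmeas i)) hG hGσ
end
end

section
/- Suppose that for each N ≥ 1, X_N and U_N are ensembles of size N of real-valued random variables such that the stacked ensemble [X_N; U_N] (the 2×N random matrix with columns (X_{Ni}, U_{Ni})) is exchangeable, Cov(U_{Ni}, U_{Nj}) = 0 for all i ≠ j, the random variable U_{N1} is in L² and has the same distribution for all N, and ‖X_{N1} − U_{N1}‖₂ → 0 as N → ∞. Then the sample mean X̄_N converges to E(U_{N1}) in probability as N → ∞. -/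
open MeasureTheory ProbabilityTheory Matrix Filter
open scoped ENNReal NNReal

noncomputable section

variable {Ω : Type*} [MeasureSpace Ω] [IsProbabilityMeasure (ℙ : Measure Ω)]

/-!
Exchangeability makes every pair `(X_{Ni}, U_{Ni})` distributed like `(X_{N0}, U_{N0})`. Split
`X̄_N - E U` into the average of the `X_{Ni} - U_{Ni}` and `Ū_N - E U`. By the triangle
inequality the first has `L²` norm at most `‖X_{N0} - U_{N0}‖₂`; the `U_{Ni}` are uncorrelated
with a common variance `σ²`, so the second has `L²` norm `σ / √(N + 1)`. Hence `X̄_N → E U` in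
`L²`, and so in probability.
-/

theorem Exchangeable.identDistrib {Ω α : Type*} [MeasureSpace Ω] [MeasurableSpace α] {N : ℕ}
    {X : Fin N → Ω → α} (hex : Exchangeable X) (hX : ∀ i, Measurable (X i)) (i j : Fin N) :
    IdentDistrib (X i) (X j) ℙ ℙ where
  aemeasurable_fst := (hX i).aemeasurable
  aemeasurable_snd := (hX j).aemeasurable
  map_eq := by
    have hjoint : Measurable fun ω k => X k ω := measurable_pi_lambda _ hX
    have hswap : Measurable fun ω k => X (Equiv.swap i j k) ω :=
      measurable_pi_lambda _ fun k => hX _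
    have h := congrArg (Measure.map (Function.eval j)) (hex (Equiv.swap i j))
    rw [Measure.map_map (measurable_pi_apply j) hswap,
      Measure.map_map (measurable_pi_apply j) hjoint] at h
    simpa [Function.comp_def] using h

theorem cov_eq_covariance {Y Z : Ω → ℝ} (hY : MemLp Y 2 ℙ) (hZ : MemLp Z 2 ℙ) :
    cov Y Z = cov[Y, Z; ℙ] :=
  (covariance_eq_sub hY hZ).symm

section

variable {Ω ι E : Type*} {mΩ : MeasurableSpace Ω} {μ : Measure Ω} [Fintype ι]

theorem eLpNorm_sub_integral_two_eq_evariance_rpow (Y : Ω → ℝ) :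
    eLpNorm (fun ω => Y ω - μ[Y]) 2 μ = eVar[Y; μ] ^ (2⁻¹ : ℝ) := by
  rw [eLpNorm_eq_lintegral_rpow_enorm_toReal two_ne_zero ENNReal.ofNat_ne_top, evariance]
  simp

theorem eLpNorm_average_le [NormedAddCommGroup E] [NormedSpace ℝ E] {p C : ℝ≥0∞} (hp : 1 ≤ p)
    {f : ι → Ω → E} (hf : ∀ i, AEStronglyMeasurable (f i) μ) (hC : ∀ i, eLpNorm (f i) p μ ≤ C) :
    eLpNorm (fun ω => (Fintype.card ι : ℝ)⁻¹ • ∑ i, f i ω) p μ ≤ C := by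
  have hsum : eLpNorm (∑ i, f i) p μ ≤ Fintype.card ι * C := calc
    eLpNorm (∑ i, f i) p μ ≤ ∑ i, eLpNorm (f i) p μ := eLpNorm_sum_le (fun i _ => hf i) hp
    _ ≤ ∑ _ : ι, C := Finset.sum_le_sum fun i _ => hC i
    _ = Fintype.card ι * C := by simp
  rw [show (fun ω => (Fintype.card ι : ℝ)⁻¹ • ∑ i, f i ω)
      = (Fintype.card ι : ℝ)⁻¹ • ∑ i, f i by ext; simp, eLpNorm_const_smul]
  rcases eq_or_ne (Fintype.card ι) 0 with h | h
  · simp [h]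
  calc ‖(Fintype.card ι : ℝ)⁻¹‖ₑ * eLpNorm (∑ i, f i) p μ
      ≤ (Fintype.card ι : ℝ≥0∞)⁻¹ * (Fintype.card ι * C) := by
        gcongr
        simp [enorm_inv, h]
    _ = C := by
      rw [← mul_assoc, ENNReal.inv_mul_cancel (by simpa using h) (by simp), one_mul]

theorem variance_average_of_uncorrelated [IsFiniteMeasure μ] {Y : ι → Ω → ℝ} {v : ℝ}
    (hY : ∀ i, MemLp (Y i) 2 μ) (huncorr : Pairwise fun i j => cov[Y i, Y j; μ] = 0)
    (hvar : ∀ i, Var[Y i; μ] = v) :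
    Var[fun ω => (Fintype.card ι : ℝ)⁻¹ * ∑ i, Y i ω; μ] = v / Fintype.card ι := by
  have hdiag : ∀ i, ∑ j, cov[Y i, Y j; μ] = v := fun i => by
    rw [Finset.sum_eq_single_of_mem i (Finset.mem_univ i) fun j _ hji => huncorr hji.symm,
      covariance_self (hY i).aemeasurable, hvar]
  rw [variance_const_mul, variance_fun_sum hY, Finset.sum_congr rfl fun i _ => hdiag i]
  rcases eq_or_ne (Fintype.card ι : ℝ) 0 with h | h
  · simp [h]
  · simp only [inv_pow, Finset.sum_const, Finset.card_univ, nsmul_eq_mul]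
    field_simp

theorem eLpNorm_average_sub_integral_of_uncorrelated [IsProbabilityMeasure μ] [Nonempty ι]
    {Y : ι → Ω → ℝ} {Z : Ω → ℝ} (hY : ∀ i, IdentDistrib (Y i) Z μ μ) (hZ : MemLp Z 2 μ)
    (huncorr : Pairwise fun i j => cov[Y i, Y j; μ] = 0) :
    eLpNorm (fun ω => (Fintype.card ι : ℝ)⁻¹ * ∑ i, Y i ω - μ[Z]) 2 μ
      = ENNReal.ofReal (Var[Z; μ] / Fintype.card ι) ^ (2⁻¹ : ℝ) := by
  have hY2 : ∀ i, MemLp (Y i) 2 μ := fun i => (hY i).symm.memLp_snd hZ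
  have hmean : μ[fun ω => (Fintype.card ι : ℝ)⁻¹ * ∑ i, Y i ω] = μ[Z] := by
    rw [integral_const_mul, integral_finsetSum _ fun i _ => (hY2 i).integrable one_le_two]
    simp [fun i => (hY i).integral_eq, Fintype.card_ne_zero]
  have hvar := variance_average_of_uncorrelated hY2 huncorr fun i => (hY i).variance_eq
  rw [← hmean, eLpNorm_sub_integral_two_eq_evariance_rpow, ← hvar,
    ofReal_variance ((memLp_finsetSum _ fun i _ => hY2 i).const_mul _)]

theorem eLpNorm_average_sub_integral_le [IsProbabilityMeasure μ] [Nonempty ι]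
    {X U : ι → Ω → ℝ} {Z : Ω → ℝ} {C : ℝ≥0∞}
    (hX : ∀ i, AEStronglyMeasurable (X i) μ) (hU : ∀ i, IdentDistrib (U i) Z μ μ)
    (hZ : MemLp Z 2 μ) (huncorr : Pairwise fun i j => cov[U i, U j; μ] = 0)
    (hXU : ∀ i, eLpNorm (X i - U i) 2 μ ≤ C) :
    eLpNorm (fun ω => (Fintype.card ι : ℝ)⁻¹ * ∑ i, X i ω - μ[Z]) 2 μ
      ≤ C + ENNReal.ofReal (Var[Z; μ] / Fintype.card ι) ^ (2⁻¹ : ℝ) := by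
  have hU2 : ∀ i, MemLp (U i) 2 μ := fun i => (hU i).symm.memLp_snd hZ
  have hdiff : ∀ i, AEStronglyMeasurable (X i - U i) μ := fun i => (hX i).sub (hU2 i).1
  have hsplit : (fun ω => (Fintype.card ι : ℝ)⁻¹ * ∑ i, X i ω - μ[Z])
      = (fun ω => (Fintype.card ι : ℝ)⁻¹ • ∑ i, (X i - U i) ω)
        + fun ω => (Fintype.card ι : ℝ)⁻¹ * ∑ i, U i ω - μ[Z] := by
    ext ω
    simp only [Pi.add_apply, Pi.sub_apply, Finset.sum_sub_distrib, smul_eq_mul]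
    ring
  rw [hsplit, ← eLpNorm_average_sub_integral_of_uncorrelated hU hZ huncorr]
  refine (eLpNorm_add_le ?_ ?_ one_le_two).trans
    (add_le_add (eLpNorm_average_le one_le_two hdiff hXU) le_rfl)
  · exact (Finset.aestronglyMeasurable_fun_sum _ fun i _ => hdiff i).const_smul
      (Fintype.card ι : ℝ)⁻¹
  · exact ((Finset.aestronglyMeasurable_fun_sum _ fun i _ => (hU2 i).1).const_mul _).sub
      aestronglyMeasurable_const

theorem tendsto_ofReal_div_succ_rpow_zero (c : ℝ) {r : ℝ} (hr : 0 < r) :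
    Tendsto (fun N : ℕ => ENNReal.ofReal (c / (N + 1 : ℕ)) ^ r) atTop (nhds 0) := by
  have h := (ENNReal.tendsto_ofReal ((tendsto_const_div_atTop_nhds_zero_nat c).comp
    (tendsto_add_atTop_nat 1))).ennrpow_const r
  simpa [Function.comp_def, ENNReal.zero_rpow_of_pos hr] using h

end

/-- weak law of large numbers for exchangeable ensembles.
If for each `N` the stacked ensemble `[X_N; U_N]` (of size `N + 1`) is exchangeable,
the members of `U_N` are uncorrelated, `U_{N1} ∈ L²` with distribution independent of `N`,
and `‖X_{N1} − U_{N1}‖₂ → 0`, then the sample mean `X̄_N` converges in probability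
to `E(U_{N1})`. -/
theorem sampleMean_tendstoInMeasure_of_exchangeable
    (X U : (N : ℕ) → Fin (N + 1) → Ω → ℝ)
    (hXmeas : ∀ N i, Measurable (X N i)) (hUmeas : ∀ N i, Measurable (U N i))
    (hex : ∀ N, Exchangeable (fun i ω => (X N i ω, U N i ω)))
    (hUuncorr : ∀ N, ∀ i j : Fin (N + 1), i ≠ j → cov (U N i) (U N j) = 0)
    (hUL2 : ∀ N, MemLp (U N 0) 2 ℙ)
    (hUid : ∀ N M : ℕ,
      Measure.map (U N 0) (ℙ : Measure Ω) = Measure.map (U M 0) (ℙ : Measure Ω))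
    (hXU : Tendsto (fun N => eLpNorm (fun ω => X N 0 ω - U N 0 ω) 2 ℙ) atTop (nhds 0)) :
    TendstoInMeasure ℙ (fun (N : ℕ) ω => (((N + 1 : ℕ) : ℝ))⁻¹ * ∑ i, X N i ω) atTop
      (fun _ => ∫ ω, U 0 0 ω) := by
  have hpair : ∀ N (i : Fin (N + 1)), IdentDistrib (fun ω => (X N i ω, U N i ω))
      (fun ω => (X N 0 ω, U N 0 ω)) ℙ ℙ := fun N i =>
    (hex N).identDistrib (fun i => (hXmeas N i).prodMk (hUmeas N i)) i 0
  have hU : ∀ N (i : Fin (N + 1)), IdentDistrib (U N i) (U 0 0) ℙ ℙ := fun N i =>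
    ((hpair N i).comp measurable_snd).trans
      ⟨(hUmeas N 0).aemeasurable, (hUmeas 0 0).aemeasurable, hUid N 0⟩
  have huncorr : ∀ N, Pairwise fun i j : Fin (N + 1) => cov[U N i, U N j; ℙ] = 0 :=
    fun N i j hij => (cov_eq_covariance ((hU N i).symm.memLp_snd (hUL2 0))
      ((hU N j).symm.memLp_snd (hUL2 0))).symm.trans (hUuncorr N i j hij)
  have hbound : ∀ N : ℕ,
      eLpNorm (fun ω => (((N + 1 : ℕ) : ℝ))⁻¹ * ∑ i, X N i ω - ∫ ω, U 0 0 ω) 2 ℙ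
        ≤ eLpNorm (fun ω => X N 0 ω - U N 0 ω) 2 ℙ
          + ENNReal.ofReal (Var[U 0 0; ℙ] / (N + 1 : ℕ)) ^ (2⁻¹ : ℝ) := fun N => by
    simpa using eLpNorm_average_sub_integral_le (C := eLpNorm (fun ω => X N 0 ω - U N 0 ω) 2 ℙ)
      (fun i => (hXmeas N i).aestronglyMeasurable) (hU N) (hUL2 0) (huncorr N)
      fun i => (((hpair N i).comp (measurable_fst.sub measurable_snd)).eLpNorm_eq 2).le
  refine tendstoInMeasure_of_tendsto_eLpNorm two_ne_zero (fun N =>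
    ((Finset.measurable_fun_sum _ fun i _ => hXmeas N i).const_mul _).aestronglyMeasurable)
    aestronglyMeasurable_const ?_
  exact tendsto_of_tendsto_of_tendsto_of_le_of_le tendsto_const_nhds
    (by simpa using hXU.add (tendsto_ofReal_div_succ_rpow_zero _ (by norm_num)))
    (fun _ => zero_le) hbound
end
end

section
/- Let U_1,…,U_N be i.i.d. ℝ^n-valued random vectors with U_i ~ N(u, Q) (multivariate Gaussian, Q symmetric positive semidefinite), let D_1,…,D_N be i.i.d. ℝ^m-valued random vectors with D_i ~ N(d, R) (R symmetric positive definite), independent of (U_1,…,U_N). Let A ∈ ℝ^{n×n}, b ∈ ℝ^n, H ∈ ℝ^{m×n}, and define the forecast members U_i^f = A U_i + b, the forecast mean u^f = A u + b, the forecast covariance Q^f = A Q A^T, the Kalman gain L = Q^f H^T (H Q^f H^T + R)^{-1}, and the analysis members U_i' = U_i^f + L(D_i − H U_i^f), i = 1,…,N. Then U_1',…,U_N' are i.i.d. with U_1' ~ N(u', Q') where u' = u^f + L(d − H u^f) and Q' = (I − L H) Q^f. -/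
/-!
The analysis member `U_i' = M U_i + L D_i + c`, with `M = (I - L H) A` and `c = (I - L H) b`,
is an affine function of the pair `(U_i, D_i)`. These pairs are independent across `i`, so the
`U_i'` are. For a fixed functional `l`, `⟪l, U_i'⟫` is the sum of the independent real Gaussians
`⟪Mᵀ l, U_i⟫` and `⟪Lᵀ l, D_i⟫` plus a constant, hence Gaussian with variance
`lᵀ (M Q Mᵀ + L R Lᵀ) l`. For the exact gain, `L (H Q^f Hᵀ + R) = Q^f Hᵀ`, and the Joseph form
`(I - L H) Q^f (I - L H)ᵀ + L R Lᵀ = (I - L H) Q^f` identifies this covariance with `Q'`.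
-/

open MeasureTheory ProbabilityTheory Matrix Filter
open scoped ENNReal NNReal

noncomputable section

variable {Ω : Type*} [MeasureSpace Ω] [IsProbabilityMeasure (ℙ : Measure Ω)]

section Independence

variable {Ω ι α β : Type*} {mΩ : MeasurableSpace Ω} {P : Measure Ω} [IsProbabilityMeasure P]
  [Fintype ι] [MeasurableSpace α] [MeasurableSpace β]

theorem iIndepFun.prodMk_of_indepFun {X : ι → Ω → α} {Y : ι → Ω → β}
    (hX : ∀ i, Measurable (X i)) (hY : ∀ i, Measurable (Y i))
    (hXi : iIndepFun X P) (hYi : iIndepFun Y P)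
    (hXY : IndepFun (fun ω i => X i ω) (fun ω i => Y i ω) P) :
    iIndepFun (fun i ω => (X i ω, Y i ω)) P := by
  have hXvec : Measurable fun ω i => X i ω := measurable_pi_lambda _ hX
  have hYvec : Measurable fun ω i => Y i ω := measurable_pi_lambda _ hY
  rw [iIndepFun_iff_map_fun_eq_pi_map fun i => ((hX i).prodMk (hY i)).aemeasurable]
  have hpair : ∀ i, P.map (fun ω => (X i ω, Y i ω)) = (P.map (X i)).prod (P.map (Y i)) :=
    fun i => (indepFun_iff_map_prod_eq_prod_map_map (hX i).aemeasurable (hY i).aemeasurable).mp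
      (hXY.comp (measurable_pi_apply i) (measurable_pi_apply i))
  simp_rw [hpair]
  rw [← (measurePreserving_arrowProdEquivProdArrow α β ι _ _).symm.map_eq,
    ← hXi.map_fun_eq_pi_map fun i => (hX i).aemeasurable,
    ← hYi.map_fun_eq_pi_map fun i => (hY i).aemeasurable,
    ← (indepFun_iff_map_prod_eq_prod_map_map hXvec.aemeasurable hYvec.aemeasurable).mp hXY,
    Measure.map_map (MeasurableEquiv.measurable _) (hXvec.prodMk hYvec)]
  rfl

end Independence

section Gaussian

variable {Ω : Type*} {mΩ : MeasurableSpace Ω} {P : Measure Ω} {n m k : ℕ}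

theorem isGaussianVec_iff_map_dotProduct {μ : Measure (Fin n → ℝ)} {u : Fin n → ℝ}
    {Q : Matrix (Fin n) (Fin n) ℝ} :
    IsGaussianVec μ u Q ↔
      ∀ l : Fin n → ℝ, μ.map (l ⬝ᵥ ·) = gaussianReal (l ⬝ᵥ u) (l ⬝ᵥ Q *ᵥ l).toNNReal :=
  Iff.rfl

theorem IsGaussianVec.map_dotProduct {X : Ω → Fin n → ℝ} (hX : Measurable X)
    {u : Fin n → ℝ} {Q : Matrix (Fin n) (Fin n) ℝ} (hXlaw : IsGaussianVec (P.map X) u Q)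
    (l : Fin n → ℝ) :
    P.map (fun ω => l ⬝ᵥ X ω) = gaussianReal (l ⬝ᵥ u) (l ⬝ᵥ Q *ᵥ l).toNNReal := by
  rw [← isGaussianVec_iff_map_dotProduct.mp hXlaw l, Measure.map_map (by fun_prop) hX]
  rfl

theorem IsGaussianVec.map_affine_add_of_indepFun {X : Ω → Fin n → ℝ} {Y : Ω → Fin m → ℝ}
    (hX : Measurable X) (hY : Measurable Y) (hXY : IndepFun X Y P)
    {u : Fin n → ℝ} {Q : Matrix (Fin n) (Fin n) ℝ} (hQ : Q.PosSemidef)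
    {d : Fin m → ℝ} {R : Matrix (Fin m) (Fin m) ℝ} (hR : R.PosSemidef)
    (hXlaw : IsGaussianVec (P.map X) u Q) (hYlaw : IsGaussianVec (P.map Y) d R)
    (M : Matrix (Fin k) (Fin n) ℝ) (K : Matrix (Fin k) (Fin m) ℝ) (c : Fin k → ℝ) :
    IsGaussianVec (P.map fun ω => M *ᵥ X ω + K *ᵥ Y ω + c)
      (M *ᵥ u + K *ᵥ d + c) (M * Q * Mᵀ + K * R * Kᵀ) := by
  refine isGaussianVec_iff_map_dotProduct.mpr fun l => ?_
  have hsum : P.map ((fun ω => (l ᵥ* M) ⬝ᵥ X ω) + fun ω => (l ᵥ* K) ⬝ᵥ Y ω) =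
      gaussianReal ((l ᵥ* M) ⬝ᵥ u + (l ᵥ* K) ⬝ᵥ d)
        (((l ᵥ* M) ⬝ᵥ Q *ᵥ (l ᵥ* M)).toNNReal + ((l ᵥ* K) ⬝ᵥ R *ᵥ (l ᵥ* K)).toNNReal) :=
    gaussianReal_add_gaussianReal_of_indepFun
      (hXY.comp (by fun_prop : Measurable ((l ᵥ* M) ⬝ᵥ ·))
        (by fun_prop : Measurable ((l ᵥ* K) ⬝ᵥ ·)))
      (hXlaw.map_dotProduct hX _) (hYlaw.map_dotProduct hY _)
  have hquad : ∀ {j : ℕ} (B : Matrix (Fin k) (Fin j) ℝ) (C : Matrix (Fin j) (Fin j) ℝ),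
      l ⬝ᵥ (B * C * Bᵀ) *ᵥ l = (l ᵥ* B) ⬝ᵥ C *ᵥ (l ᵥ* B) := fun B C => by
    rw [← mulVec_mulVec, ← mulVec_mulVec, dotProduct_mulVec, mulVec_transpose]
  rw [Measure.map_map (by fun_prop) (by fun_prop)]
  have hfun : (l ⬝ᵥ ·) ∘ (fun ω => M *ᵥ X ω + K *ᵥ Y ω + c) =
      (· + l ⬝ᵥ c) ∘ ((fun ω => (l ᵥ* M) ⬝ᵥ X ω) + fun ω => (l ᵥ* K) ⬝ᵥ Y ω) := by
    ext ω
    simp only [Function.comp_apply, Pi.add_apply, dotProduct_add, dotProduct_mulVec]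
  rw [hfun, ← Measure.map_map (by fun_prop) (by fun_prop), hsum, gaussianReal_map_add_const,
    ← Real.toNNReal_add (by simpa using hQ.dotProduct_mulVec_nonneg (l ᵥ* M))
      (by simpa using hR.dotProduct_mulVec_nonneg (l ᵥ* K)),
    add_mulVec, dotProduct_add l ((M * Q * Mᵀ) *ᵥ l), hquad, hquad]
  simp only [dotProduct_add, dotProduct_mulVec]

end Gaussian

section KalmanAlgebra

variable {ι κ : Type*} [Fintype ι] [Fintype κ]

theorem kalmanUpdate_eq_affine [DecidableEq ι] {𝕜 : Type*} [CommRing 𝕜] (A : Matrix ι ι 𝕜)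
    (b : ι → 𝕜) (H : Matrix κ ι 𝕜) (L : Matrix ι κ 𝕜) (x : ι → 𝕜) (w : κ → 𝕜) :
    A *ᵥ x + b + L *ᵥ (w - H *ᵥ (A *ᵥ x + b)) =
      ((1 - L * H) * A) *ᵥ x + L *ᵥ w + (1 - L * H) *ᵥ b := by
  simp only [mulVec_sub, mulVec_add, ← mulVec_mulVec, sub_mulVec, one_mulVec]
  abel

theorem joseph_form [DecidableEq ι] {𝕜 : Type*} [CommRing 𝕜] {P : Matrix ι ι 𝕜}
    {H : Matrix κ ι 𝕜} {R : Matrix κ κ 𝕜} {L : Matrix ι κ 𝕜} (hL : L * (H * P * Hᵀ + R) = P * Hᵀ) :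
    (1 - L * H) * P * (1 - L * H)ᵀ + L * R * Lᵀ = (1 - L * H) * P := by
  have hcross : (1 - L * H) * P * Hᵀ = L * R := by
    rw [Matrix.sub_mul, Matrix.sub_mul, Matrix.one_mul, ← hL, Matrix.mul_add]
    simp only [Matrix.mul_assoc, add_sub_cancel_left]
  rw [transpose_sub, transpose_one, transpose_mul, Matrix.mul_sub, Matrix.mul_one,
    ← Matrix.mul_assoc _ Hᵀ, hcross, sub_add_cancel]

theorem mul_innovationCov_of_kalmanGain [DecidableEq κ] {P : Matrix ι ι ℝ} (hP : P.PosSemidef)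
    {R : Matrix κ κ ℝ} (hR : R.PosDef) (H : Matrix κ ι ℝ) {L : Matrix ι κ ℝ}
    (hL : L = P * Hᵀ * (H * P * Hᵀ + R)⁻¹) :
    L * (H * P * Hᵀ + R) = P * Hᵀ := by
  have hHPH : (H * P * Hᵀ).PosSemidef := by
    simpa using hP.mul_mul_conjTranspose_same H
  have hS : (H * P * Hᵀ + R).PosDef := Matrix.PosDef.posSemidef_add hHPH hR
  rw [hL]
  exact nonsing_inv_mul_cancel_right _ (P * Hᵀ) hS.det_pos.ne'.isUnit

end KalmanAlgebra

/-- Applying the Kalman filter analysis step with the exact gain `L` to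
i.i.d. Gaussian ensemble members `U_i ~ N(u, Q)`, with independently perturbed data
`D_i ~ N(d, R)`, produces i.i.d. members `U_i' ~ N(u', Q')` where `u'` and `Q'` are the
Kalman filter posterior mean and covariance. -/
theorem analysis_ensemble_iid_gaussian
    {n m N : ℕ} (U : Fin N → Ω → Fin n → ℝ) (D : Fin N → Ω → Fin m → ℝ)
    (u : Fin n → ℝ) (Q : Matrix (Fin n) (Fin n) ℝ) (hQ : Q.PosSemidef)
    (d : Fin m → ℝ) (R : Matrix (Fin m) (Fin m) ℝ) (hR : R.PosDef)
    (hUmeas : ∀ i, Measurable (U i)) (hDmeas : ∀ i, Measurable (D i))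
    (hUindep : iIndepFun U ℙ)
    (hUdist : ∀ i, IsGaussianVec (Measure.map (U i) ℙ) u Q)
    (hDindep : iIndepFun D ℙ)
    (hDdist : ∀ i, IsGaussianVec (Measure.map (D i) ℙ) d R)
    (hUD : IndepFun (fun ω (i : Fin N) => U i ω) (fun ω (i : Fin N) => D i ω) ℙ)
    (A : Matrix (Fin n) (Fin n) ℝ) (b : Fin n → ℝ) (H : Matrix (Fin m) (Fin n) ℝ)
    (Uf : Fin N → Ω → Fin n → ℝ) (hUf : ∀ i ω, Uf i ω = A.mulVec (U i ω) + b)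
    (uf : Fin n → ℝ) (huf : uf = A.mulVec u + b)
    (Qf : Matrix (Fin n) (Fin n) ℝ) (hQf : Qf = A * Q * Aᵀ)
    (L : Matrix (Fin n) (Fin m) ℝ) (hL : L = Qf * Hᵀ * (H * Qf * Hᵀ + R)⁻¹)
    (U' : Fin N → Ω → Fin n → ℝ)
    (hU' : ∀ i ω, U' i ω = Uf i ω + L.mulVec (D i ω - H.mulVec (Uf i ω))) :
    iIndepFun U' ℙ ∧
      ∀ i, IsGaussianVec (Measure.map (U' i) ℙ)
        (uf + L.mulVec (d - H.mulVec uf)) ((1 - L * H) * Qf) := by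
  have hQf_psd : Qf.PosSemidef := hQf ▸ by simpa using hQ.mul_mul_conjTranspose_same A
  have hgain := mul_innovationCov_of_kalmanGain hQf_psd hR H hL
  set M := (1 - L * H) * A
  have hU'_affine : U' = fun i ω => M *ᵥ U i ω + L *ᵥ D i ω + (1 - L * H) *ᵥ b := by
    funext i ω
    rw [hU' i ω, hUf i ω, kalmanUpdate_eq_affine]
  have hmean : uf + L *ᵥ (d - H *ᵥ uf) = M *ᵥ u + L *ᵥ d + (1 - L * H) *ᵥ b := by
    rw [huf, kalmanUpdate_eq_affine]
  have hcov : (1 - L * H) * Qf = M * Q * Mᵀ + L * R * Lᵀ := by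
    rw [← joseph_form hgain, hQf]
    simp only [M, transpose_mul, Matrix.mul_assoc]
  refine ⟨?_, fun i => ?_⟩
  · rw [hU'_affine]
    exact (iIndepFun.prodMk_of_indepFun hUmeas hDmeas hUindep hDindep hUD).comp
      (fun _ p => M *ᵥ p.1 + L *ᵥ p.2 + (1 - L * H) *ᵥ b) fun _ => by fun_prop
  · rw [hU'_affine, hmean, hcov]
    exact (hUdist i).map_affine_add_of_indepFun (hUmeas i) (hDmeas i)
      (hUD.comp (measurable_pi_apply i) (measurable_pi_apply i)) hQ hR.posSemidef (hDdist i) _ _ _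
end
end

section
/- Let H ∈ ℝ^{m×n}, let R ∈ ℝ^{m×m} be symmetric positive definite, let Q be a random symmetric positive semidefinite n×n matrix with ‖Q‖_p < ∞ for some p ∈ [1, ∞), and let K = Q H^T (H Q H^T + R)^{-1}. Then ‖K‖_p ≤ ‖H‖ ‖R^{-1}‖ ‖Q‖_p. -/
open MeasureTheory ProbabilityTheory Matrix Filter
open scoped ENNReal NNReal

noncomputable section

variable {Ω : Type*} [MeasureSpace Ω] [IsProbabilityMeasure (ℙ : Measure Ω)]

/-! Pointwise in `ω`, submultiplicativity gives `‖K‖ ≤ ‖Q‖ ‖H‖ ‖(HQHᵀ + R)⁻¹‖`, so it suffices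
that inversion is antitone in operator norm on the Loewner order: if `R` is positive definite and
`R ≤ S`, then Cauchy–Schwarz for the form of `R⁻¹` gives
`‖x‖² ≤ ‖R⁻¹‖ ⟪x, R x⟫ ≤ ‖R⁻¹‖ ⟪x, S x⟫ ≤ ‖R⁻¹‖ ‖x‖ ‖S x‖`, whence `‖S⁻¹‖ ≤ ‖R⁻¹‖`.
The pointwise bound with a deterministic constant passes directly to `L^p` norms. -/

section
open scoped Matrix.Norms.L2Operator MatrixOrder RealInnerProductSpace

lemma norm_opCLM {m n : ℕ} (M : Matrix (Fin m) (Fin n) ℝ) : ‖opCLM M‖ = ‖M‖ := rfl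

variable {n : Type*} [Fintype n] [DecidableEq n]

lemma Matrix.PosSemidef.dotProduct_mulVec_sq_le {M : Matrix n n ℝ} (hM : M.PosSemidef)
    (x y : n → ℝ) : (x ⬝ᵥ M *ᵥ y) ^ 2 ≤ (x ⬝ᵥ M *ᵥ x) * (y ⬝ᵥ M *ᵥ y) := by
  obtain ⟨B, rfl⟩ := CStarAlgebra.nonneg_iff_eq_star_mul_self.mp hM.nonneg
  have hform (u v : n → ℝ) : u ⬝ᵥ (star B * B) *ᵥ v = ∑ i, (B *ᵥ u) i * (B *ᵥ v) i := by
    rw [← mulVec_mulVec, dotProduct_mulVec, star_eq_conjTranspose,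
      conjTranspose_eq_transpose_of_trivial, vecMul_transpose]
    rfl
  simpa only [hform, sq] using Finset.sum_mul_sq_le_sq_mul_sq Finset.univ (B *ᵥ x) (B *ᵥ y)

local notation "T" => toEuclideanCLM (n := n) (𝕜 := ℝ)

lemma Matrix.inner_toEuclideanCLM_self_le (M : Matrix n n ℝ) (x : EuclideanSpace ℝ n) :
    ⟪x, T M x⟫ ≤ ‖M‖ * ‖x‖ ^ 2 :=
  calc ⟪x, T M x⟫ ≤ ‖x‖ * ‖T M x‖ := real_inner_le_norm _ _
    _ ≤ ‖x‖ * (‖M‖ * ‖x‖) := by gcongr; exact (T M).le_opNorm x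
    _ = ‖M‖ * ‖x‖ ^ 2 := by ring

lemma Matrix.PosDef.norm_sq_le_l2_opNorm_inv_mul_inner {R : Matrix n n ℝ} (hR : R.PosDef)
    (x : EuclideanSpace ℝ n) : ‖x‖ ^ 2 ≤ ‖R⁻¹‖ * ⟪x, T R x⟫ := by
  have hnorm : ‖x‖ ^ 2 = x.ofLp ⬝ᵥ x.ofLp := by
    rw [← real_inner_self_eq_norm_sq, EuclideanSpace.inner_eq_star_dotProduct, star_trivial]
  have hRR : R⁻¹ *ᵥ (R *ᵥ x.ofLp) = x.ofLp := by
    rw [mulVec_mulVec, nonsing_inv_mul _ hR.det_pos.ne'.isUnit, one_mulVec]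
  have hCS := hR.inv.posSemidef.dotProduct_mulVec_sq_le x.ofLp (R *ᵥ x.ofLp)
  rw [hRR, dotProduct_comm (R *ᵥ x.ofLp), ← hnorm] at hCS
  have hinv : x.ofLp ⬝ᵥ R⁻¹ *ᵥ x.ofLp ≤ ‖R⁻¹‖ * ‖x‖ ^ 2 := by
    simpa only [inner_toEuclideanCLM] using inner_toEuclideanCLM_self_le R⁻¹ x
  have hR0 : 0 ≤ x.ofLp ⬝ᵥ R *ᵥ x.ofLp := by
    simpa using hR.posSemidef.dotProduct_mulVec_nonneg x.ofLp
  rw [inner_toEuclideanCLM]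
  rcases (sq_nonneg ‖x‖).eq_or_lt with h0 | hpos
  · rw [← h0]; positivity
  refine le_of_mul_le_mul_left ?_ hpos
  calc ‖x‖ ^ 2 * ‖x‖ ^ 2 ≤ (x.ofLp ⬝ᵥ R⁻¹ *ᵥ x.ofLp) * (x.ofLp ⬝ᵥ R *ᵥ x.ofLp) := by
        rwa [← sq]
    _ ≤ ‖R⁻¹‖ * ‖x‖ ^ 2 * (x.ofLp ⬝ᵥ R *ᵥ x.ofLp) := by gcongr
    _ = ‖x‖ ^ 2 * (‖R⁻¹‖ * (x.ofLp ⬝ᵥ R *ᵥ x.ofLp)) := by ring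

lemma Matrix.PosDef.l2_opNorm_inv_le_of_le {R S : Matrix n n ℝ} (hR : R.PosDef) (hRS : R ≤ S) :
    ‖S⁻¹‖ ≤ ‖R⁻¹‖ := by
  have hS : S.PosDef := by
    simpa using hR.add_posSemidef (le_iff.mp hRS)
  refine (T S⁻¹).opNorm_le_bound (norm_nonneg _) fun y => ?_
  set x := T S⁻¹ y
  have hSx : T S x = y := by
    change (T S * T S⁻¹) y = y
    rw [← map_mul, mul_nonsing_inv _ hS.det_pos.ne'.isUnit, map_one]
    rfl
  have hinner_le : ⟪x, T R x⟫ ≤ ⟪x, T S x⟫ := by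
    have := (le_iff.mp hRS).dotProduct_mulVec_nonneg x.ofLp
    rw [star_trivial, sub_mulVec, dotProduct_sub, sub_nonneg] at this
    simpa only [inner_toEuclideanCLM] using this
  have hsq : ‖x‖ * ‖x‖ ≤ ‖x‖ * (‖R⁻¹‖ * ‖y‖) :=
    calc ‖x‖ * ‖x‖ = ‖x‖ ^ 2 := by ring
      _ ≤ ‖R⁻¹‖ * ⟪x, T R x⟫ := hR.norm_sq_le_l2_opNorm_inv_mul_inner x
      _ ≤ ‖R⁻¹‖ * ⟪x, y⟫ := by rw [← hSx]; gcongr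
      _ ≤ ‖R⁻¹‖ * (‖x‖ * ‖y‖) := by gcongr; exact real_inner_le_norm x y
      _ = ‖x‖ * (‖R⁻¹‖ * ‖y‖) := by ring
  rcases (norm_nonneg x).eq_or_lt with h0 | hpos
  · rw [← h0]; positivity
  · exact le_of_mul_le_mul_left hsq hpos

lemma l2_opNorm_gain_le {m : Type*} [Fintype m] [DecidableEq m] (H : Matrix m n ℝ)
    {R : Matrix m m ℝ} (hR : R.PosDef) {Q : Matrix n n ℝ} (hQ : Q.PosSemidef) :
    ‖Q * Hᵀ * (H * Q * Hᵀ + R)⁻¹‖ ≤ ‖H‖ * ‖R⁻¹‖ * ‖Q‖ := by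
  have hHQH : 0 ≤ H * Q * Hᵀ := by
    simpa [conjTranspose_eq_transpose_of_trivial] using (hQ.mul_mul_conjTranspose_same H).nonneg
  have hinv : ‖(H * Q * Hᵀ + R)⁻¹‖ ≤ ‖R⁻¹‖ :=
    hR.l2_opNorm_inv_le_of_le (le_add_of_nonneg_left hHQH)
  have hHt : ‖Hᵀ‖ = ‖H‖ := by
    rw [← conjTranspose_eq_transpose_of_trivial, l2_opNorm_conjTranspose]
  calc ‖Q * Hᵀ * (H * Q * Hᵀ + R)⁻¹‖ ≤ ‖Q‖ * ‖Hᵀ‖ * ‖(H * Q * Hᵀ + R)⁻¹‖ :=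
        (l2_opNorm_mul _ _).trans (by gcongr; exact l2_opNorm_mul _ _)
    _ ≤ ‖Q‖ * ‖H‖ * ‖R⁻¹‖ := by rw [hHt]; gcongr
    _ = ‖H‖ * ‖R⁻¹‖ * ‖Q‖ := by ring

end

theorem mLp_gain_le_general {n m : ℕ}
    (H : Matrix (Fin m) (Fin n) ℝ) (R : Matrix (Fin m) (Fin m) ℝ) (hR : R.PosDef)
    (Q : Ω → Matrix (Fin n) (Fin n) ℝ) (hQpsd : ∀ ω, (Q ω).PosSemidef)
    (p : ℝ)
    (K : Ω → Matrix (Fin n) (Fin m) ℝ)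
    (hK : ∀ ω, K ω = Q ω * Hᵀ * (H * Q ω * Hᵀ + R)⁻¹) :
    mLp p K ≤ ENNReal.ofReal (‖opCLM H‖ * ‖opCLM R⁻¹‖) * mLp p Q := by
  refine eLpNorm_le_mul_eLpNorm_of_ae_le_mul (ae_of_all _ fun ω => ?_) _
  simp only [norm_opCLM, hK ω]
  exact l2_opNorm_gain_le H hR (hQpsd ω)

/-- `L^p` bound on the gain. For a random symmetric positive semidefinite
matrix `Q` with `‖Q‖_p < ∞` and `K = Q Hᵀ (H Q Hᵀ + R)⁻¹`,
`‖K‖_p ≤ ‖H‖ ‖R⁻¹‖ ‖Q‖_p`. -/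
theorem mLp_gain_le {n m : ℕ}
    (H : Matrix (Fin m) (Fin n) ℝ) (R : Matrix (Fin m) (Fin m) ℝ) (hR : R.PosDef)
    (Q : Ω → Matrix (Fin n) (Fin n) ℝ) (hQpsd : ∀ ω, (Q ω).PosSemidef)
    (p : ℝ) (hp : 1 ≤ p) (hQfin : mLp p Q < ⊤)
    (K : Ω → Matrix (Fin n) (Fin m) ℝ)
    (hK : ∀ ω, K ω = Q ω * Hᵀ * (H * Q ω * Hᵀ + R)⁻¹) :
    mLp p K ≤ ENNReal.ofReal (‖opCLM H‖ * ‖opCLM R⁻¹‖) * mLp p Q :=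
  mLp_gain_le_general H R hR Q hQpsd p K hK
end
end
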